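/- Let ℓ be the piecewise linear function given by ℓ(x) = 1 pt for x ∈ [dih_min, d0], ℓ(x) = −0.207045x + 0.31023815 for x ∈ [d0, 2π − 4d0], and ℓ(x) = 0.028792018 for x ∈ (2π − 4d0, dih_max], where d0 = arccos(1/3) and dih_min, dih_max are as in the quasi-regular tetrahedron dihedral bounds. Then for any t1,...,t5 ∈ [dih_min, dih_max] with t1 + ⋯ + t5 ≥ 2π, one has ℓ(t1) + ⋯ + ℓ(t5) < 4.52 pt. -/

import Mathlib

noncomputable section
open Real

def ufun (a b c : ℝ) : ℝ := -a^2 - b^2 - c^2 + 2*a*b + 2*a*c + 2*b*c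

/-- ∂Δ/∂x4 for the Cayley–Menger-type polynomial Δ. -/
def deltaX4 (x1 x2 x3 x4 x5 x6 : ℝ) : ℝ :=
  x1*(-x1+x2+x3-x4+x5+x6) - x1*x4 + x2*x5 + x3*x6 - x2*x3 - x5*x6

/-- One point: pt = 11π/3 − 12 arccos(1/√3). -/
def pt : ℝ := 11*π/3 - 12*Real.arccos (1/Real.sqrt 3)

/-- dih_min = dih(S(2,2.51,2,2,2.51,2)) ≈ 0.8639. -/
def dihMin : ℝ :=
  Real.arccos (deltaX4 4 (2.51^2) 4 4 (2.51^2) 4 /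
    Real.sqrt (ufun 4 (2.51^2) 4 * ufun 4 4 (2.51^2)))

/-- dih_max = arccos(−29003/96999). -/
def dihMax : ℝ := Real.arccos (-(29003/96999))

/-- d0 = dih(S(2,2,2,2,2,2)) = arccos(1/3). -/
def d0 : ℝ := Real.arccos (1/3)

/-- The piecewise linear upper bound ℓ on the compression as a function of the
dihedral angle (Calculations 9.1, 9.6.1, 9.6.2). -/
def ell (x : ℝ) : ℝ :=
  if x ≤ d0 then pt
  else if x ≤ 2*π - 4*d0 then -0.207045*x + 0.31023815
  else 0.028792018

/-!
On `(-∞, 2π - 4 d0]` the function `ℓ` lies below the affine function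
`-0.207045 x + 0.31023815` (because `pt` is below its value at `d0`), and beyond that point it
is the constant `0.028792018`; in particular `ℓ` never exceeds the affine value at `d0`.
So either some `tᵢ` exceeds `2π - 4 d0`, and the sum is at most
`0.028792018 + 4 (0.31023815 - 0.207045 d0)`, or all `tᵢ` lie in the affine range and the sum
is at most `5 · 0.31023815 - 0.207045 · 2π`. Both bounds fall short of `4.52 pt` by only about
`2·10⁻⁷`. Since `d0 = π - 2 arccos(1/√3)` and `pt = 11π/3 - 12 arccos(1/√3)`, this needs
`arccos(1/√3)` to about `10⁻⁹`, which a degree-12 Taylor bound for `cos` provides.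
-/

open Finset Nat

lemma sum_pow_mul_I_add_sum_pow_neg_mul_I (z : ℂ) (n : ℕ) :
    ∑ m ∈ range (2 * n), (z * Complex.I) ^ m / m ! +
        ∑ m ∈ range (2 * n), (-z * Complex.I) ^ m / m ! =
      2 * ∑ k ∈ range n, (-1) ^ k * z ^ (2 * k) / (2 * k)! := by
  induction n with
  | zero => simp
  | succ n ih =>
    rw [show 2 * (n + 1) = 2 * n + 1 + 1 by ring]
    simp only [sum_range_succ, mul_add, ← ih]
    have h_even : (z * Complex.I) ^ (2 * n) = (-1) ^ n * z ^ (2 * n) := by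
      rw [mul_pow, pow_mul Complex.I, Complex.I_sq, mul_comm]
    have h_even_neg : (-z * Complex.I) ^ (2 * n) = (-1) ^ n * z ^ (2 * n) := by
      rw [neg_mul, pow_mul, neg_sq, ← pow_mul, h_even]
    have h_odd_neg : (-z * Complex.I) ^ (2 * n + 1) = -(z * Complex.I) ^ (2 * n + 1) := by
      rw [neg_mul, Odd.neg_pow ⟨n, rfl⟩]
    rw [h_even, h_even_neg, h_odd_neg]
    ring

lemma abs_cos_sub_sum_range_le {x : ℝ} (hx : |x| ≤ 1) {n : ℕ} (hn : 0 < n) :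
    |cos x - ∑ k ∈ range n, (-1) ^ k * x ^ (2 * k) / (2 * k)!| ≤
      |x| ^ (2 * n) * (((2 * n).succ : ℝ) * ((2 * n)! * (2 * n : ℕ) : ℝ)⁻¹) := by
  set e₁ := Complex.exp (x * Complex.I) -
    ∑ m ∈ range (2 * n), ((x : ℂ) * Complex.I) ^ m / (m ! : ℂ)
  set e₂ := Complex.exp (-x * Complex.I) -
    ∑ m ∈ range (2 * n), (-(x : ℂ) * Complex.I) ^ m / (m ! : ℂ)
  have hnorm₁ : ‖(x : ℂ) * Complex.I‖ = |x| := by simp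
  have hnorm₂ : ‖-(x : ℂ) * Complex.I‖ = |x| := by simp
  have he₁ := Complex.exp_bound (hnorm₁.trans_le hx) (n := 2 * n) (by omega)
  have he₂ := Complex.exp_bound (hnorm₂.trans_le hx) (n := 2 * n) (by omega)
  rw [hnorm₁] at he₁
  rw [hnorm₂] at he₂
  have hsplit : ((cos x - ∑ k ∈ range n, (-1) ^ k * x ^ (2 * k) / (2 * k)! : ℝ) : ℂ) =
      (e₁ + e₂) / 2 := by
    push_cast
    rw [Complex.cos]
    linear_combination (sum_pow_mul_I_add_sum_pow_neg_mul_I x n) / 2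
  rw [← Real.norm_eq_abs, ← Complex.norm_real, hsplit, norm_div, Complex.norm_two]
  linarith [norm_add_le e₁ e₂]

lemma lt_arccos_of_lt_cos {a y : ℝ} (ha₀ : 0 ≤ a) (haπ : a ≤ π) (hy : -1 ≤ y)
    (h : y < cos a) :
    a < arccos y := by
  simpa [arccos_cos ha₀ haπ] using arccos_lt_arccos hy h (cos_le_one a)

lemma arccos_lt_of_cos_lt {b y : ℝ} (hb₀ : 0 ≤ b) (hbπ : b ≤ π) (hy : y ≤ 1)
    (h : cos b < y) :
    arccos y < b := by
  simpa [arccos_cos hb₀ hbπ] using arccos_lt_arccos (neg_one_le_cos b) h hy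

lemma one_div_sqrt_three_le_one : 1 / √3 ≤ 1 := by
  rw [div_le_one (by positivity)]
  exact one_le_sqrt.mpr (by norm_num)

lemma arccos_one_div_sqrt_three_lt : arccos (1 / √3) < 0.955316620 := by
  have hcos : cos 0.955316620 < 0.5773502686 := by
    have h := (abs_le.mp (abs_cos_sub_sum_range_le (x := 0.955316620)
      (by norm_num [abs_of_pos]) (n := 7) (by norm_num))).2
    norm_num [sum_range_succ, Nat.factorial] at h
    linarith
  refine arccos_lt_of_cos_lt (by norm_num) (by linarith [pi_gt_three])
    one_div_sqrt_three_le_one (hcos.trans ?_)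
  rw [lt_div_iff₀ (by positivity)]
  nlinarith [sq_sqrt (show (0 : ℝ) ≤ 3 by norm_num), sqrt_nonneg 3]

lemma lt_arccos_one_div_sqrt_three : 0.955316617 < arccos (1 / √3) := by
  have hcos : 0.5773502695 < cos 0.955316617 := by
    have h := (abs_le.mp (abs_cos_sub_sum_range_le (x := 0.955316617)
      (by norm_num [abs_of_pos]) (n := 7) (by norm_num))).1
    norm_num [sum_range_succ, Nat.factorial] at h
    linarith
  refine lt_arccos_of_lt_cos (by norm_num) (by linarith [pi_gt_three])
    (by linarith [show 0 ≤ 1 / √3 by positivity]) (lt_of_le_of_lt ?_ hcos)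
  rw [div_le_iff₀ (by positivity)]
  nlinarith [sq_sqrt (show (0 : ℝ) ≤ 3 by norm_num), sqrt_nonneg 3]

lemma d0_eq_pi_sub_two_mul_arccos : d0 = π - 2 * arccos (1 / √3) := by
  have hle : arccos (1 / √3) ≤ π / 2 := arccos_le_pi_div_two.mpr (by positivity)
  have hcos : cos (π - 2 * arccos (1 / √3)) = 1 / 3 := by
    rw [cos_pi_sub, cos_two_mul, cos_arccos (by linarith [show 0 ≤ 1 / √3 by positivity])
      one_div_sqrt_three_le_one]
    field_simp
    rw [sq_sqrt (by norm_num)]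
    norm_num
  rw [d0, ← hcos, arccos_cos] <;> linarith [arccos_nonneg (1 / √3)]

lemma pt_lt_affine_d0 : pt < -0.207045 * d0 + 0.31023815 := by
  rw [pt, d0_eq_pi_sub_two_mul_arccos]
  linarith [pi_lt_d20, lt_arccos_one_div_sqrt_three]

lemma d0_lt_two_pi_sub_four_mul_d0 : d0 < 2 * π - 4 * d0 := by
  rw [d0_eq_pi_sub_two_mul_arccos]
  linarith [pi_lt_d20, lt_arccos_one_div_sqrt_three]

lemma affine_sum_at_two_pi_lt : -0.207045 * (2 * π) + 5 * 0.31023815 < 4.52 * pt := by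
  rw [pt]
  linarith [pi_gt_d20, arccos_one_div_sqrt_three_lt]

lemma const_add_four_affine_d0_lt :
    0.028792018 + 4 * (-0.207045 * d0 + 0.31023815) < 4.52 * pt := by
  rw [pt, d0_eq_pi_sub_two_mul_arccos]
  linarith [pi_gt_d20, arccos_one_div_sqrt_three_lt]

lemma ell_le_affine {t : ℝ} (ht : t ≤ 2 * π - 4 * d0) :
    ell t ≤ -0.207045 * t + 0.31023815 := by
  unfold ell
  split_ifs with hd0
  · linarith [pt_lt_affine_d0]
  · exact le_rfl

lemma ell_of_lt {t : ℝ} (ht : 2 * π - 4 * d0 < t) : ell t = 0.028792018 := by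
  have := d0_lt_two_pi_sub_four_mul_d0
  rw [ell, if_neg (by linarith), if_neg (by linarith)]

lemma ell_le_affine_d0 (t : ℝ) : ell t ≤ -0.207045 * d0 + 0.31023815 := by
  unfold ell
  split_ifs with hd0 hmid
  · exact pt_lt_affine_d0.le
  · linarith
  · linarith [d0_lt_two_pi_sub_four_mul_d0, pi_lt_d20]

lemma ell_five_sum_lt_of_lt_first {a : ℝ} (ha : 2 * π - 4 * d0 < a) (b c d e : ℝ) :
    ell a + ell b + ell c + ell d + ell e < 4.52 * pt := by
  rw [ell_of_lt ha]
  linarith [ell_le_affine_d0 b, ell_le_affine_d0 c, ell_le_affine_d0 d, ell_le_affine_d0 e,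
    const_add_four_affine_d0_lt]

theorem ell_five_sum_lt
    (t1 t2 t3 t4 t5 : ℝ)
    (hsum : 2*π ≤ t1 + t2 + t3 + t4 + t5) :
    ell t1 + ell t2 + ell t3 + ell t4 + ell t5 < 4.52 * pt := by
  by_cases c1 : 2 * π - 4 * d0 < t1
  · exact ell_five_sum_lt_of_lt_first c1 t2 t3 t4 t5
  by_cases c2 : 2 * π - 4 * d0 < t2
  · linarith [ell_five_sum_lt_of_lt_first c2 t1 t3 t4 t5]
  by_cases c3 : 2 * π - 4 * d0 < t3
  · linarith [ell_five_sum_lt_of_lt_first c3 t1 t2 t4 t5]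
  by_cases c4 : 2 * π - 4 * d0 < t4
  · linarith [ell_five_sum_lt_of_lt_first c4 t1 t2 t3 t5]
  by_cases c5 : 2 * π - 4 * d0 < t5
  · linarith [ell_five_sum_lt_of_lt_first c5 t1 t2 t3 t4]
  linarith [ell_le_affine (not_lt.mp c1), ell_le_affine (not_lt.mp c2),
    ell_le_affine (not_lt.mp c3), ell_le_affine (not_lt.mp c4), ell_le_affine (not_lt.mp c5),
    affine_sum_at_two_pi_lt]
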